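/- Let M be an object of a ℚ-linear rigid tensor (Karoubian) category equipped with a tensor functor I to finite-dimensional graded ℚ-vector spaces, and let f be an endomorphism of M. If I(f) is an isomorphism, then f is an isomorphism. (Cayley–Hamilton conservativity for endomorphisms.) -/
import Mathlib


open CategoryTheory

/-- Cayley–Hamilton conservativity for endomorphisms.  `C` is a
ℚ-linear monoidal (rigid, Karoubian) category with finite-dimensional Hom-spaces
and `I` is a faithful ℚ-linear additive functor to graded finite-dimensional
ℚ-vector spaces (additivity and ℚ-linearity being expressed degreewise).  If
`I (f)` is an isomorphism for an endomorphism `f` of `M`, then `f` is an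
isomorphism. -/
theorem stmt_1 {C : Type*} [Category C] [Preadditive C] [Linear ℚ C]
    [MonoidalCategory C] [IsIdempotentComplete C]
    (hfd : ∀ X Y : C, FiniteDimensional ℚ (X ⟶ Y))
    (I : C ⥤ GradedObject ℤ (ModuleCat ℚ))
    [I.Faithful]
    (hIfd : ∀ (X : C) (i : ℤ), FiniteDimensional ℚ ((I.obj X) i))
    (hadd : ∀ (X Y : C) (f g : X ⟶ Y) (i : ℤ), I.map (f + g) i = I.map f i + I.map g i)
    (hlin : ∀ (X Y : C) (q : ℚ) (f : X ⟶ Y) (i : ℤ), I.map (q • f) i = q • I.map f i)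
    (M : C) (f : M ⟶ M) (hf : IsIso (I.map f)) :
    IsIso f := by
  classical
  haveI : FiniteDimensional ℚ (End M) := hfd M M
  let fA : End M := f
  have hint : IsIntegral ℚ fA := IsIntegral.of_finite ℚ fA
  set p : Polynomial ℚ := minpoly ℚ fA with hp
  have hp0 : p ≠ 0 := minpoly.ne_zero hint
  obtain ⟨q, hq, hqnd⟩ :=
    p.exists_eq_pow_rootMultiplicity_mul_and_not_dvd hp0 0
  rw [map_zero, sub_zero] at hq hqnd
  set n := p.rootMultiplicity 0
  have hq0 : q.coeff 0 ≠ 0 := fun h => hqnd (Polynomial.X_dvd_iff.mpr h)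
  -- the degreewise algebra homomorphisms
  have map_zero' : ∀ i : ℤ, I.map (0 : M ⟶ M) i = 0 := by
    intro i
    have := hadd M M 0 0 i
    rw [add_zero] at this
    exact (left_eq_add.mp this)
  have mapid : ∀ i : ℤ, I.map (𝟙 M) i = (1 : End ((I.obj M) i)) := by
    intro i
    show I.map (𝟙 M) i = 𝟙 _
    rw [I.map_id]
    rfl
  let Φ : ∀ i : ℤ, End M →ₐ[ℚ] End ((I.obj M) i) := fun i =>
    { toFun := fun g => (I.map (g : M ⟶ M) i : End ((I.obj M) i))
      map_one' := mapid i
      map_mul' := fun a b => by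
        show I.map ((b : M ⟶ M) ≫ a) i = (I.map (b : M ⟶ M) ≫ I.map (a : M ⟶ M)) i
        rw [I.map_comp]
      map_zero' := map_zero' i
      map_add' := fun a b => hadd M M a b i
      commutes' := fun r => by
        show I.map ((algebraMap ℚ (End M) r : End M) : M ⟶ M) i
            = algebraMap ℚ (End ((I.obj M) i)) r
        rw [Algebra.algebraMap_eq_smul_one, Algebra.algebraMap_eq_smul_one]
        have h1 : ((r • (1 : End M)) : M ⟶ M) = r • (𝟙 M) := rfl
        rw [h1, hlin M M r (𝟙 M) i, mapid i] }
  -- each component of I.map f is a unit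
  have hunit : ∀ i : ℤ, IsUnit (Φ i fA) := by
    intro i
    haveI : IsIso ((GradedObject.eval i).map (I.map f)) := inferInstance
    have h2 : IsIso (I.map f i) := this
    exact (isUnit_iff_isIso (I.map f i : End ((I.obj M) i))).mpr h2
  -- apply Φ i to the relation p(f) = 0
  have hpf : Polynomial.aeval fA p = 0 := minpoly.aeval ℚ fA
  have hqf : Polynomial.aeval fA q = 0 := by
    have hcomp : ∀ i : ℤ, Polynomial.aeval (Φ i fA) q = 0 := by
      intro i
      have h1 : Polynomial.aeval (Φ i fA) p = 0 := by
        rw [Polynomial.aeval_algHom_apply, hpf, map_zero]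
      rw [hq, map_mul, map_pow, Polynomial.aeval_X] at h1
      have hu : IsUnit ((Φ i fA) ^ n) := (hunit i).pow n
      exact (hu.mul_right_eq_zero).mp h1
    have heq : I.map ((Polynomial.aeval fA q : End M) : M ⟶ M) =
        I.map (0 : M ⟶ M) := by
      funext i
      rw [map_zero' i]
      show (Φ i) (Polynomial.aeval fA q) = 0
      rw [← Polynomial.aeval_algHom_apply]
      exact hcomp i
    have h4 := I.map_injective heq
    exact h4
  -- extract a unit from q(f) = 0
  have hdecomp : Polynomial.X * q.divX + Polynomial.C (q.coeff 0) = q :=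
    Polynomial.X_mul_divX_add q
  have hrel : fA * Polynomial.aeval fA q.divX + algebraMap ℚ (End M) (q.coeff 0) = 0 := by
    have := congrArg (Polynomial.aeval fA) hdecomp
    rw [map_add, map_mul, Polynomial.aeval_X, Polynomial.aeval_C, hqf] at this
    exact this
  have hinv : fA * (-(q.coeff 0)⁻¹ • Polynomial.aeval fA q.divX) = 1 := by
    have h5 : fA * Polynomial.aeval fA q.divX = -(algebraMap ℚ (End M) (q.coeff 0)) :=
      eq_neg_of_add_eq_zero_left hrel
    rw [mul_smul_comm, h5, Algebra.algebraMap_eq_smul_one, smul_neg, neg_smul, smul_smul,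
      neg_neg, inv_mul_cancel₀ hq0, one_smul]
  have hinv' : (-(q.coeff 0)⁻¹ • Polynomial.aeval fA q.divX) * fA = 1 := by
    have h5 : Polynomial.aeval fA q.divX * fA = -(algebraMap ℚ (End M) (q.coeff 0)) := by
      have hc : Polynomial.aeval fA q.divX * fA = fA * Polynomial.aeval fA q.divX := by
        have h6 : Polynomial.aeval fA (q.divX * Polynomial.X)
            = Polynomial.aeval fA (Polynomial.X * q.divX) := by rw [mul_comm]
        rw [map_mul, map_mul, Polynomial.aeval_X] at h6
        exact h6
      rw [hc]
      exact eq_neg_of_add_eq_zero_left hrel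
    rw [smul_mul_assoc, h5, Algebra.algebraMap_eq_smul_one, smul_neg, neg_smul, smul_smul,
      neg_neg, inv_mul_cancel₀ hq0, one_smul]
  have hu : IsUnit fA := ⟨⟨fA, _, hinv, hinv'⟩, rfl⟩
  exact (isUnit_iff_isIso fA).mp hu
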